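/- For every positive integer d, the number of subgroups of ℤ ⊕ ℤ of index d equals σ(d), the sum of the positive divisors of d. -/

import Mathlib

noncomputable section

namespace Stmt3Aux

open AddSubgroup

/-- image under first projection -/
def A (H : AddSubgroup (ℤ × ℤ)) : AddSubgroup ℤ := H.map (AddMonoidHom.fst ℤ ℤ)

/-- fiber of second coordinate over 0 -/
def C (H : AddSubgroup (ℤ × ℤ)) : AddSubgroup ℤ := H.comap (AddMonoidHom.inr ℤ ℤ)

lemma mem_A {H : AddSubgroup (ℤ × ℤ)} {x : ℤ} : x ∈ A H ↔ ∃ y, (x, y) ∈ H := by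
  constructor
  · rintro ⟨⟨u, v⟩, hp, rfl⟩
    exact ⟨v, hp⟩
  · rintro ⟨y, hy⟩
    exact ⟨(x, y), hy, rfl⟩

lemma mem_C {H : AddSubgroup (ℤ × ℤ)} {y : ℤ} : y ∈ C H ↔ (0, y) ∈ H := Iff.rfl

lemma index_eq (H : AddSubgroup (ℤ × ℤ)) : H.index = (A H).index * (C H).index := by
  set K : AddSubgroup (ℤ × ℤ) := (A H).comap (AddMonoidHom.fst ℤ ℤ) with hKdef
  have hHK : H ≤ K := fun p hp => by
    exact AddSubgroup.mem_comap.2 ⟨p, hp, rfl⟩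
  have hK : K.index = (A H).index :=
    AddSubgroup.index_comap_of_surjective _ (fun x => ⟨(x, 0), rfl⟩)
  -- the inclusion ℤ → K, y ↦ (0, y)
  have h0 : ∀ y : ℤ, ((0 : ℤ), y) ∈ K := fun y => AddSubgroup.mem_comap.2 (zero_mem _)
  let ι : ℤ →+ K :=
    { toFun := fun y => ⟨((0 : ℤ), y), h0 y⟩
      map_zero' := rfl
      map_add' := fun a b => by ext <;> simp }
  let φ : ℤ →+ K ⧸ (H.addSubgroupOf K) := (QuotientAddGroup.mk' _).comp ι
  have hker : φ.ker = C H := by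
    ext y
    simp only [AddMonoidHom.mem_ker, φ, AddMonoidHom.comp_apply, QuotientAddGroup.mk'_apply]
    rw [QuotientAddGroup.eq_zero_iff, AddSubgroup.mem_addSubgroupOf]
    rfl
  have hsurj : Function.Surjective φ := by
    intro q
    induction q using QuotientAddGroup.induction_on with
    | H k =>
      obtain ⟨⟨x, y⟩, hxA⟩ := k
      obtain ⟨y', hy'⟩ := mem_A.1 hxA
      refine ⟨y - y', ?_⟩
      change QuotientAddGroup.mk _ = QuotientAddGroup.mk _
      rw [QuotientAddGroup.eq]
      rw [AddSubgroup.mem_addSubgroupOf]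
      show (-(((0:ℤ), y - y') : ℤ × ℤ) + ((x, y) : ℤ × ℤ)) ∈ H
      have : (-(((0:ℤ), y - y') : ℤ × ℤ) + ((x, y) : ℤ × ℤ)) = (x, y') := by
        ext <;> simp <;> ring
      rw [this]
      exact hy'
  have hrel : H.relIndex K = (C H).index := by
    have h1 : (C H).index = Nat.card (K ⧸ (H.addSubgroupOf K)) := by
      rw [← hker, AddSubgroup.index_ker]
      rw [AddMonoidHom.range_eq_top.2 hsurj]
      exact Nat.card_congr AddSubgroup.topEquiv.toEquiv
    rw [AddSubgroup.relIndex, AddSubgroup.index_eq_card, h1]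
  rw [← AddSubgroup.relIndex_mul_index hHK, hK, hrel, mul_comm]

lemma exists_gen (B : AddSubgroup ℤ) : ∃ n : ℕ, B = zmultiples (n : ℤ) := by
  obtain ⟨a, ha⟩ := Int.subgroup_cyclic B
  refine ⟨a.natAbs, ?_⟩
  rw [ha, ← AddSubgroup.zmultiples_eq_closure]
  ext x
  rw [Int.mem_zmultiples_iff, Int.mem_zmultiples_iff, Int.natAbs_dvd]

/-- The subgroup generated by `(a,b)` and `(0,c)`. -/
def Hgen (a b c : ℤ) : AddSubgroup (ℤ × ℤ) := closure {(a, b), (0, c)}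

lemma mem_Hgen {a b c x y : ℤ} :
    (x, y) ∈ Hgen a b c ↔ ∃ m n : ℤ, m * a = x ∧ m * b + n * c = y := by
  rw [Hgen, AddSubgroup.mem_closure_pair]
  constructor
  · rintro ⟨m, n, h⟩
    refine ⟨m, n, ?_, ?_⟩
    · have := congrArg Prod.fst h; simpa [smul_eq_mul] using this
    · have := congrArg Prod.snd h; simpa [smul_eq_mul] using this
  · rintro ⟨m, n, h1, h2⟩
    exact ⟨m, n, by ext <;> simp [smul_eq_mul, h1, h2]⟩

lemma A_Hgen (a b c : ℤ) : A (Hgen a b c) = zmultiples a := by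
  ext x
  rw [mem_A, Int.mem_zmultiples_iff]
  constructor
  · rintro ⟨y, hy⟩
    obtain ⟨m, n, h1, -⟩ := mem_Hgen.1 hy
    exact ⟨m, by linarith⟩
  · rintro ⟨k, rfl⟩
    exact ⟨k * b, mem_Hgen.2 ⟨k, 0, by ring, by ring⟩⟩

lemma C_Hgen (a b c : ℤ) (ha : a ≠ 0) : C (Hgen a b c) = zmultiples c := by
  ext y
  rw [mem_C, Int.mem_zmultiples_iff]
  constructor
  · intro hy
    obtain ⟨m, n, h1, h2⟩ := mem_Hgen.1 hy
    have hm : m = 0 := by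
      rcases mul_eq_zero.1 h1 with h | h
      · exact h
      · exact absurd h ha
    subst hm
    exact ⟨n, by linarith⟩
  · rintro ⟨k, rfl⟩
    exact mem_Hgen.2 ⟨0, k, by ring, by ring⟩

lemma Hgen_le_of_dvd (a b b' c : ℤ) (h : c ∣ b - b') : Hgen a b c ≤ Hgen a b' c := by
  obtain ⟨k, hk⟩ := h
  rw [Hgen, AddSubgroup.closure_le]
  rintro w hw
  simp only [Set.mem_insert_iff, Set.mem_singleton_iff] at hw
  rcases hw with rfl | rfl
  · exact mem_Hgen.2 ⟨1, k, by ring, by linarith⟩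
  · exact mem_Hgen.2 ⟨0, 1, by ring, by ring⟩

lemma Hgen_eq_of_dvd (a b b' c : ℤ) (h : c ∣ b - b') : Hgen a b c = Hgen a b' c :=
  le_antisymm (Hgen_le_of_dvd a b b' c h)
    (Hgen_le_of_dvd a b' b c (by simpa using dvd_neg.2 h))

lemma zmultiples_nat_inj {p q : ℕ} (h : zmultiples ((p : ℕ) : ℤ) = zmultiples ((q : ℕ) : ℤ)) :
    p = q := by
  have h1 : ((p : ℕ) : ℤ) ∣ q := Int.mem_zmultiples_iff.1 (h ▸ AddSubgroup.mem_zmultiples _)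
  have h2 : ((q : ℕ) : ℤ) ∣ p := Int.mem_zmultiples_iff.1 (h ▸ AddSubgroup.mem_zmultiples _)
  exact Nat.dvd_antisymm (Int.natCast_dvd_natCast.1 h1) (Int.natCast_dvd_natCast.1 h2)

lemma index_Hgen (a b c : ℤ) (ha : a ≠ 0) :
    (Hgen a b c).index = a.natAbs * c.natAbs := by
  rw [index_eq, A_Hgen, C_Hgen a b c ha, Int.index_zmultiples, Int.index_zmultiples]

end Stmt3Aux

end

/-- The number of subgroups of `ℤ ⊕ ℤ` of index `d` equals `σ(d)`,
the sum of the positive divisors of `d`. -/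
theorem stmt3 (d : ℕ) (hd : 1 ≤ d) :
    Nat.card {H : AddSubgroup (ℤ × ℤ) // H.index = d} = ∑ i ∈ d.divisors, i := by
  classical
  have hd0 : d ≠ 0 := by omega
  haveI inst : ∀ a : d.divisors, NeZero (d / (a : ℕ)) := fun a =>
    ⟨Nat.ne_of_gt (Nat.div_pos (Nat.le_of_dvd (by omega) (Nat.mem_divisors.1 a.2).1)
      (Nat.pos_of_mem_divisors a.2))⟩
  set G : (Σ a : d.divisors, ZMod (d / (a : ℕ))) → {H : AddSubgroup (ℤ × ℤ) // H.index = d} :=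
    fun x => ⟨Stmt3Aux.Hgen ((x.1 : ℕ) : ℤ) ((x.2.val : ℕ) : ℤ) ((d / (x.1 : ℕ) : ℕ) : ℤ), by
      have ha : ((x.1 : ℕ) : ℤ) ≠ 0 := by
        exact_mod_cast Nat.pos_of_mem_divisors x.1.2 |>.ne'
      rw [Stmt3Aux.index_Hgen _ _ _ ha, Int.natAbs_natCast, Int.natAbs_natCast]
      exact Nat.mul_div_cancel' (Nat.mem_divisors.1 x.1.2).1⟩ with hG
  have hinj : Function.Injective G := by
    rintro ⟨⟨a₁, h₁⟩, b₁⟩ ⟨⟨a₂, h₂⟩, b₂⟩ h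
    have h' := Subtype.ext_iff.1 h
    simp only [hG] at h'
    have hAeq := congrArg Stmt3Aux.A h'
    rw [Stmt3Aux.A_Hgen, Stmt3Aux.A_Hgen] at hAeq
    have ha : a₁ = a₂ := Stmt3Aux.zmultiples_nat_inj hAeq
    subst ha
    have hbb : b₁ = b₂ := by
      have ha0 : ((a₁ : ℕ) : ℤ) ≠ 0 := by
        exact_mod_cast (Nat.pos_of_mem_divisors h₁).ne'
      have hmem : (((a₁ : ℕ) : ℤ), ((b₁.val : ℕ) : ℤ)) ∈
          Stmt3Aux.Hgen ((a₁ : ℕ) : ℤ) ((b₂.val : ℕ) : ℤ) ((d / a₁ : ℕ) : ℤ) := by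
        rw [← h']
        exact Stmt3Aux.mem_Hgen.2 ⟨1, 0, by ring, by ring⟩
      obtain ⟨m, n, hm1, hm2⟩ := Stmt3Aux.mem_Hgen.1 hmem
      have hm : m = 1 := by
        have : m * ((a₁ : ℕ) : ℤ) = 1 * ((a₁ : ℕ) : ℤ) := by linarith
        exact mul_right_cancel₀ ha0 this
      subst hm
      have hdvd : ((d / a₁ : ℕ) : ℤ) ∣ ((b₁.val : ℕ) : ℤ) - ((b₂.val : ℕ) : ℤ) :=
        ⟨n, by linarith⟩
      haveI : NeZero (d / a₁) := inst ⟨a₁, h₁⟩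
      have := (ZMod.intCast_eq_intCast_iff ((b₁.val : ℕ) : ℤ) ((b₂.val : ℕ) : ℤ) (d / a₁)).2
        (Int.modEq_iff_dvd.2 (by rw [← neg_sub]; exact dvd_neg.2 hdvd))
      have hcast : ((b₁.val : ℕ) : ZMod (d / a₁)) = ((b₂.val : ℕ) : ZMod (d / a₁)) := by
        exact_mod_cast this
      rwa [ZMod.natCast_rightInverse b₁, ZMod.natCast_rightInverse b₂] at hcast
    subst hbb
    rfl
  have hsurj : Function.Surjective G := by
    rintro ⟨H, hH⟩
    obtain ⟨p, hA⟩ := Stmt3Aux.exists_gen (Stmt3Aux.A H)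
    obtain ⟨q, hC⟩ := Stmt3Aux.exists_gen (Stmt3Aux.C H)
    have hpq : p * q = d := by
      have h1 := Stmt3Aux.index_eq H
      rw [hA, hC, Int.index_zmultiples, Int.index_zmultiples, Int.natAbs_natCast,
        Int.natAbs_natCast, hH] at h1
      exact h1.symm
    have hp0 : p ≠ 0 := by rintro rfl; simp at hpq; omega
    have hq0 : q ≠ 0 := by rintro rfl; simp at hpq; omega
    have hdp : d / p = q := by
      rw [← hpq]; exact Nat.mul_div_cancel_left q (Nat.pos_of_ne_zero hp0)
    subst hdp
    obtain ⟨y, hy⟩ := Stmt3Aux.mem_A.1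
      (show ((p : ℕ) : ℤ) ∈ Stmt3Aux.A H from hA ▸ AddSubgroup.mem_zmultiples _)
    have key : H = Stmt3Aux.Hgen ((p : ℕ) : ℤ) y ((d / p : ℕ) : ℤ) := by
      apply le_antisymm
      · rintro ⟨x, z⟩ hxz
        have hx : ((p : ℕ) : ℤ) ∣ x := by
          have : x ∈ Stmt3Aux.A H := Stmt3Aux.mem_A.2 ⟨z, hxz⟩
          rwa [hA, Int.mem_zmultiples_iff] at this
        obtain ⟨m, rfl⟩ := hx
        have h2 : ((0 : ℤ), z - m * y) ∈ H := by
          have hsm : m • (((p : ℕ) : ℤ), y) ∈ H := H.zsmul_mem hy m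
          have heq : (((p : ℕ) : ℤ) * m, z) - m • (((p : ℕ) : ℤ), y) = ((0 : ℤ), z - m * y) := by
            ext <;> simp [smul_eq_mul] <;> ring
          have := H.sub_mem hxz hsm
          rwa [heq] at this
        have hqd : ((d / p : ℕ) : ℤ) ∣ z - m * y := by
          have : z - m * y ∈ Stmt3Aux.C H := Stmt3Aux.mem_C.2 h2
          rwa [hC, Int.mem_zmultiples_iff] at this
        obtain ⟨n, hn⟩ := hqd
        exact Stmt3Aux.mem_Hgen.2 ⟨m, n, by ring, by linarith⟩
      · rw [Stmt3Aux.Hgen, AddSubgroup.closure_le]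
        rintro w hw
        simp only [Set.mem_insert_iff, Set.mem_singleton_iff] at hw
        rcases hw with rfl | rfl
        · exact hy
        · exact Stmt3Aux.mem_C.1 (hC ▸ AddSubgroup.mem_zmultiples _)
    haveI : NeZero (d / p) := ⟨hq0⟩
    have hpmem : p ∈ d.divisors := Nat.mem_divisors.2 ⟨⟨d / p, hpq.symm⟩, hd0⟩
    refine ⟨⟨⟨p, hpmem⟩, ((y : ZMod (d / p)))⟩, ?_⟩
    apply Subtype.ext
    simp only [hG]
    rw [key]
    apply Stmt3Aux.Hgen_eq_of_dvd
    have hcast : ((((y : ZMod (d / p)).val : ℕ) : ℤ) : ZMod (d / p)) = ((y : ℤ) : ZMod (d / p)) := by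
      push_cast
      rw [ZMod.natCast_rightInverse (y : ZMod (d / p))]
    have := (ZMod.intCast_eq_intCast_iff _ _ _).1 hcast
    have := Int.ModEq.dvd this
    simpa using dvd_neg.2 this
  have hcard : Nat.card {H : AddSubgroup (ℤ × ℤ) // H.index = d}
      = Nat.card (Σ a : d.divisors, ZMod (d / (a : ℕ))) :=
    (Nat.card_congr (Equiv.ofBijective G ⟨hinj, hsurj⟩)).symm
  rw [hcard, Nat.card_eq_fintype_card, Fintype.card_sigma]
  have : ∀ a : d.divisors, Fintype.card (ZMod (d / (a : ℕ))) = d / (a : ℕ) := fun a => ZMod.card _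
  simp_rw [this]
  rw [Finset.sum_coe_sort d.divisors (fun i => d / i)]
  exact Nat.sum_div_divisors d id
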